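/- Let K be a finite set of clues on an n×m Slant board all of whose clue values are 0 or 4, and let f and g be two valid solutions for K. Then f and g agree on every cell having a clued vertex as a corner; that is, the diagonals of all cells incident to a clued vertex are forced. -/
import Mathlib


/-!
Slant boards.

An `n×m` Slant board has cells indexed by `Fin n × Fin m` and vertices indexed by
`Fin (n+1) × Fin (m+1)`.  The four corners of cell `(i,j)` are the vertices
`(i,j)`, `(i+1,j)`, `(i,j+1)`, `(i+1,j+1)`.  A full assignment is a function from
cells to `Bool`: `true` means the cell contains the diagonal joining its two
corners with even coordinate sums, `false` the other diagonal.
-/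

namespace Slant

abbrev Cell (n m : ℕ) := Fin n × Fin m
abbrev Vertex (n m : ℕ) := Fin (n + 1) × Fin (m + 1)

variable {n m : ℕ}

def corner00 (c : Cell n m) : Vertex n m := (c.1.castSucc, c.2.castSucc)
def corner10 (c : Cell n m) : Vertex n m := (c.1.succ, c.2.castSucc)
def corner01 (c : Cell n m) : Vertex n m := (c.1.castSucc, c.2.succ)
def corner11 (c : Cell n m) : Vertex n m := (c.1.succ, c.2.succ)

/-- The endpoints of the diagonal of cell `c` joining the two corners whose
coordinate sums are even. -/
def evenDiag (c : Cell n m) : Vertex n m × Vertex n m :=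
  if (c.1.val + c.2.val) % 2 = 0 then (corner00 c, corner11 c) else (corner10 c, corner01 c)

/-- The endpoints of the diagonal of cell `c` joining the two corners whose
coordinate sums are odd. -/
def oddDiag (c : Cell n m) : Vertex n m × Vertex n m :=
  if (c.1.val + c.2.val) % 2 = 0 then (corner10 c, corner01 c) else (corner00 c, corner11 c)

/-- The endpoints of the diagonal chosen in cell `c` by the assignment value `b`. -/
def diagEnds (c : Cell n m) (b : Bool) : Vertex n m × Vertex n m :=
  if b then evenDiag c else oddDiag c

/-- The diagonal graph of the (partial) assignment `p`, using only the cells in `D`: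
two vertices are adjacent iff the chosen diagonal of some cell in `D` joins them.
For a full assignment take `D = Set.univ`. -/
def DiagGraph (D : Set (Cell n m)) (p : Cell n m → Bool) : SimpleGraph (Vertex n m) :=
  SimpleGraph.fromRel (fun u v => ∃ c ∈ D, diagEnds c (p c) = (u, v))

/-- `v` is one of the four corners of cell `c`. -/
def isCorner (v : Vertex n m) (c : Cell n m) : Prop :=
  v = corner00 c ∨ v = corner10 c ∨ v = corner01 c ∨ v = corner11 c

/-- The chosen diagonal of cell `c` under assignment `f` passes through vertex `v`. -/
def passesThrough (f : Cell n m → Bool) (c : Cell n m) (v : Vertex n m) : Prop :=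
  (diagEnds c (f c)).1 = v ∨ (diagEnds c (f c)).2 = v

/-- The degree of a vertex in a graph on the board's vertices. -/
noncomputable def deg (G : SimpleGraph (Vertex n m)) (v : Vertex n m) : ℕ :=
  (G.neighborSet v).ncard

lemma ends_spec (c : Cell n m) (b : Bool) :
    diagEnds c b = (corner00 c, corner11 c) ∨ diagEnds c b = (corner10 c, corner01 c) := by
  cases b <;> rcases eq_or_ne ((c.1.val + c.2.val) % 2) 0 with hp | hp <;>
    simp [diagEnds, evenDiag, oddDiag, hp]

lemma ends_vals (c : Cell n m) (b : Bool) :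
    ((diagEnds c b).1.1.val + (diagEnds c b).2.1.val = 2 * c.1.val + 1) ∧
    ((diagEnds c b).1.2.val + (diagEnds c b).2.2.val = 2 * c.2.val + 1) := by
  rcases ends_spec c b with h | h <;> rw [h] <;>
    simp [corner00, corner01, corner10, corner11] <;> omega

lemma ends_ne (c : Cell n m) (b : Bool) : (diagEnds c b).1 ≠ (diagEnds c b).2 := by
  have h := (ends_vals c b).1
  intro he
  rw [he] at h
  omega

lemma adj_iff (f : Cell n m → Bool) (u v : Vertex n m) :
    (DiagGraph (Set.univ : Set (Cell n m)) f).Adj u v ↔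
      u ≠ v ∧ ∃ c, diagEnds c (f c) = (u, v) ∨ diagEnds c (f c) = (v, u) := by
  simp [DiagGraph, SimpleGraph.fromRel_adj, ← exists_or]

lemma neighbor_prop {f : Cell n m → Bool} {v u : Vertex n m}
    (h : (DiagGraph (Set.univ : Set (Cell n m)) f).Adj v u) :
    (u.1.val = v.1.val + 1 ∨ u.1.val + 1 = v.1.val) ∧
    (u.2.val = v.2.val + 1 ∨ u.2.val + 1 = v.2.val) := by
  rw [adj_iff] at h
  obtain ⟨hne, c, hc⟩ := h
  rcases ends_spec c (f c) with hs | hs <;> rcases hc with hc | hc <;> rw [hc] at hs <;>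
    simp [Prod.ext_iff, Fin.ext_iff, corner00, corner01, corner10, corner11] at hs <;>
    omega

lemma not_passes_of_deg_zero {f : Cell n m → Bool} {v : Vertex n m}
    (h : deg (DiagGraph (Set.univ : Set (Cell n m)) f) v = 0) (c : Cell n m) :
    ¬ passesThrough f c v := by
  intro hp
  have hemp : (DiagGraph (Set.univ : Set (Cell n m)) f).neighborSet v = ∅ :=
    (Set.ncard_eq_zero (Set.toFinite _)).1 h
  rcases hp with hp | hp
  · have hadj : (DiagGraph (Set.univ : Set (Cell n m)) f).Adj v (diagEnds c (f c)).2 := by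
      rw [adj_iff]
      refine ⟨by rw [← hp]; exact ends_ne c (f c), c, Or.inl ?_⟩
      rw [← hp]
    have : (diagEnds c (f c)).2 ∈ (DiagGraph (Set.univ : Set (Cell n m)) f).neighborSet v := hadj
    rw [hemp] at this
    exact this
  · have hadj : (DiagGraph (Set.univ : Set (Cell n m)) f).Adj v (diagEnds c (f c)).1 := by
      rw [adj_iff]
      refine ⟨by rw [← hp]; exact (ends_ne c (f c)).symm, c, Or.inr ?_⟩
      rw [← hp]
    have : (diagEnds c (f c)).1 ∈ (DiagGraph (Set.univ : Set (Cell n m)) f).neighborSet v := hadj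
    rw [hemp] at this
    exact this

lemma corner_vals {v : Vertex n m} {c : Cell n m} (hc : isCorner v c) :
    (v.1.val = c.1.val ∨ v.1.val = c.1.val + 1) ∧
    (v.2.val = c.2.val ∨ v.2.val = c.2.val + 1) := by
  rcases hc with h | h | h | h <;> subst h <;>
    simp [corner00, corner01, corner10, corner11]

lemma passes_of_deg_four {f : Cell n m → Bool} {v : Vertex n m}
    (h : deg (DiagGraph (Set.univ : Set (Cell n m)) f) v = 4)
    {c : Cell n m} (hc : isCorner v c) : passesThrough f c v := by
  classical
  set G := DiagGraph (Set.univ : Set (Cell n m)) f with hG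
  have hfin : (G.neighborSet v).Finite := Set.toFinite _
  have hcard : hfin.toFinset.card = 4 := by
    rw [← Set.ncard_eq_toFinset_card _ hfin]; exact h
  have hmem : ∀ u ∈ hfin.toFinset, G.Adj v u := by
    intro u hu
    rw [Set.Finite.mem_toFinset] at hu
    exact hu
  have hsurj := Finset.surj_on_of_inj_on_of_card_le
      (s := hfin.toFinset) (t := (Finset.univ : Finset (Bool × Bool)))
      (fun u _ => (decide (u.1.val = v.1.val + 1), decide (u.2.val = v.2.val + 1)))
      (fun _ _ => Finset.mem_univ _)
      (fun u1 u2 h1 h2 heq => by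
        have p1 := neighbor_prop (hmem u1 h1)
        have p2 := neighbor_prop (hmem u2 h2)
        rw [Prod.mk.injEq, decide_eq_decide, decide_eq_decide] at heq
        have e1 : u1.1.val = u2.1.val := by omega
        have e2 : u1.2.val = u2.2.val := by omega
        exact Prod.ext (Fin.ext e1) (Fin.ext e2))
      (by rw [hcard]; simp)
  obtain ⟨u, hu, hbits⟩ := hsurj
      (decide (v.1.val = c.1.val), decide (v.2.val = c.2.val)) (Finset.mem_univ _)
  rw [Prod.mk.injEq, decide_eq_decide, decide_eq_decide] at hbits
  have hadj := hmem u hu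
  have hp := neighbor_prop hadj
  have hcv := corner_vals hc
  have key1 : v.1.val + u.1.val = 2 * c.1.val + 1 := by omega
  have key2 : v.2.val + u.2.val = 2 * c.2.val + 1 := by omega
  rw [adj_iff] at hadj
  obtain ⟨hne, c', hc'⟩ := hadj
  have hv1 := (ends_vals c' (f c')).1
  have hv2 := (ends_vals c' (f c')).2
  have hcc : c' = c := by
    rcases hc' with hcc | hcc <;> rw [hcc] at hv1 hv2 <;>
      exact Prod.ext (Fin.ext (by simp at hv1 ⊢; omega)) (Fin.ext (by simp at hv2 ⊢; omega))
  rw [hcc] at hc'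
  rcases hc' with hcc' | hcc'
  · exact Or.inl (by rw [hcc'])
  · exact Or.inr (by rw [hcc'])

lemma passes_flip {c : Cell n m} {v : Vertex n m} (hc : isCorner v c) (b : Bool) :
    ((diagEnds c b).1 = v ∨ (diagEnds c b).2 = v) ↔
      ¬ ((diagEnds c (!b)).1 = v ∨ (diagEnds c (!b)).2 = v) := by
  rcases eq_or_ne ((c.1.val + c.2.val) % 2) 0 with hp | hp <;>
    rcases hc with h | h | h | h <;> subst h <;> cases b <;>
      simp [diagEnds, evenDiag, oddDiag, hp, corner00, corner01, corner10, corner11,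
        Prod.ext_iff, Fin.ext_iff]

lemma eq_of_passes_iff {f g : Cell n m → Bool} {c : Cell n m} {v : Vertex n m}
    (hc : isCorner v c) (h : passesThrough f c v ↔ passesThrough g c v) : f c = g c := by
  by_contra hne
  have hgc : g c = !(f c) := by
    cases hf : f c <;> cases hg : g c <;> simp_all
  unfold passesThrough at h
  rw [hgc] at h
  have := passes_flip hc (f c)
  tauto

/-- If all clue values are `0` or `4`, then any two valid solutions
agree on every cell having a clued vertex as a corner. -/
theorem zero_four_clues_forced (n m : ℕ) (K : Finset (Vertex n m × ℕ))
    (hK : ∀ q ∈ K, q.2 = 0 ∨ q.2 = 4)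
    (f g : Cell n m → Bool)
    (hfacyc : (DiagGraph (Set.univ : Set (Cell n m)) f).IsAcyclic)
    (hfsat : ∀ q ∈ K, deg (DiagGraph (Set.univ : Set (Cell n m)) f) q.1 = q.2)
    (hgacyc : (DiagGraph (Set.univ : Set (Cell n m)) g).IsAcyclic)
    (hgsat : ∀ q ∈ K, deg (DiagGraph (Set.univ : Set (Cell n m)) g) q.1 = q.2) :
    ∀ c : Cell n m, (∃ q ∈ K, isCorner q.1 c) → f c = g c := by
  rintro c ⟨q, hq, hcorner⟩
  have hf := hfsat q hq
  have hg := hgsat q hq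
  rcases hK q hq with h0 | h4
  · rw [h0] at hf hg
    exact eq_of_passes_iff hcorner
      (iff_of_false (not_passes_of_deg_zero hf c) (not_passes_of_deg_zero hg c))
  · rw [h4] at hf hg
    exact eq_of_passes_iff hcorner
      (iff_of_true (passes_of_deg_four hf hcorner) (passes_of_deg_four hg hcorner))

end Slant
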